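/- arXiv:1901.03444 — 7 statements merged into one kernel-verified Lean document; each statement's English description precedes it below -/
import Mathlib

section
/- Let 1 ≤ p < ∞ and let U, V be real numbers with U·V ≤ 0. Define g(t) = |U − tV|^p + |U − V|^{p−2}(U − V)·V·|t|^p for t ∈ ℝ. Then for all t ∈ ℝ, g(t) ≤ g(1) = |U − V|^{p−2}(U − V)·U. -/
/-!
Since `U * V ≤ 0`, we have `|U - V| = |U| + |V|`, and `|U - V| ^ (p - 2) * (U - V)` multiplies `U`
and `V` with opposite, known signs. With `a = |U|`, `b = |V|`, `s = |t|` the inequality thus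
reduces to `(a + b * s) ^ p ≤ (a + b) ^ (p - 1) * (a + b * s ^ p)`, which is Hölder's inequality
for the weights `a, b` and the values `1, s`.
-/

open Real

lemma add_mul_rpow_le_rpow_sub_one_mul {p a b s : ℝ} (hp : 1 ≤ p) (ha : 0 ≤ a) (hb : 0 ≤ b)
    (hs : 0 ≤ s) : (a + b * s) ^ p ≤ (a + b) ^ (p - 1) * (a + b * s ^ p) := by
  have hp0 : p ≠ 0 := by positivity
  have holder := inner_le_weight_mul_Lp_of_nonneg Finset.univ hp ![a, b] ![1, s]
    (by simp [Fin.forall_fin_two, ha, hb]) (by simp [Fin.forall_fin_two, hs])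
  simp only [Fin.sum_univ_two, Matrix.cons_val_zero, Matrix.cons_val_one, mul_one, one_rpow]
    at holder
  calc (a + b * s) ^ p ≤ ((a + b) ^ (1 - p⁻¹) * (a + b * s ^ p) ^ p⁻¹) ^ p := by gcongr
    _ = (a + b) ^ (p - 1) * (a + b * s ^ p) := by
      rw [mul_rpow (by positivity) (by positivity), ← rpow_mul (by positivity),
        ← rpow_mul (by positivity), inv_mul_cancel₀ hp0, rpow_one, sub_mul, one_mul,
        inv_mul_cancel₀ hp0]

lemma abs_sub_eq_abs_add_abs_of_mul_nonpos {x y : ℝ} (h : x * y ≤ 0) : |x - y| = |x| + |y| := by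
  rw [sub_eq_add_neg, ← abs_neg y, abs_add_eq_add_abs_iff]
  rcases mul_nonpos_iff.mp h with ⟨hx, hy⟩ | ⟨hx, hy⟩
  · exact .inl ⟨hx, by linarith⟩
  · exact .inr ⟨hx, by linarith⟩

lemma abs_rpow_sub_two_mul_self_mul {p x y : ℝ} (hx : x ≠ 0) (hxy : 0 ≤ x * y) :
    |x| ^ (p - 2) * x * y = |x| ^ (p - 1) * |y| := by
  rw [mul_assoc, ← abs_of_nonneg hxy, abs_mul, ← mul_assoc, show p - 1 = p - 2 + 1 by ring,
    rpow_add_one (abs_ne_zero.mpr hx)]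

theorem stmt0 (p U V : ℝ) (hp : 1 ≤ p) (hUV : U * V ≤ 0) :
    (∀ t : ℝ, |U - t * V| ^ p + |U - V| ^ (p - 2) * (U - V) * V * |t| ^ p ≤
      |U - 1 * V| ^ p + |U - V| ^ (p - 2) * (U - V) * V * |(1 : ℝ)| ^ p) ∧
    |U - 1 * V| ^ p + |U - V| ^ (p - 2) * (U - V) * V * |(1 : ℝ)| ^ p =
      |U - V| ^ (p - 2) * (U - V) * U := by
  have hp0 : p ≠ 0 := by positivity
  rcases eq_or_ne (U - V) 0 with hUV0 | hUV0
  · obtain ⟨rfl, rfl⟩ : U = 0 ∧ V = 0 := by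
      obtain rfl : U = V := sub_eq_zero.mp hUV0
      exact ⟨by nlinarith, by nlinarith⟩
    simp [zero_rpow hp0]
  set c := |U - V| ^ (p - 1) with hc
  have hV : |U - V| ^ (p - 2) * (U - V) * V = -(c * |V|) := by
    have := abs_rpow_sub_two_mul_self_mul (p := p) hUV0 (y := -V) (by nlinarith [sq_nonneg V])
    rw [mul_neg, abs_neg] at this
    linarith
  have hU : |U - V| ^ (p - 2) * (U - V) * U = c * |U| :=
    abs_rpow_sub_two_mul_self_mul hUV0 (by nlinarith [sq_nonneg U])
  have hpow : |U - V| ^ p = c * |U - V| := by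
    rw [hc, rpow_sub_one (abs_ne_zero.mpr hUV0), div_mul_cancel₀ _ (abs_ne_zero.mpr hUV0)]
  simp only [one_mul, abs_one, one_rpow, mul_one]
  rw [hV, hU, hpow, abs_sub_eq_abs_add_abs_of_mul_nonpos hUV]
  refine ⟨fun t => ?_, by ring⟩
  calc |U - t * V| ^ p + -(c * |V|) * |t| ^ p
      ≤ (|U| + |V| * |t|) ^ p - c * (|V| * |t| ^ p) := by
        have htri : |U - t * V| ≤ |U| + |V| * |t| := by
          simpa [abs_mul, mul_comm] using abs_sub U (t * V)
        have htri_pow : |U - t * V| ^ p ≤ (|U| + |V| * |t|) ^ p := by gcongr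
        linarith
    _ ≤ c * (|U| + |V| * |t| ^ p) - c * (|V| * |t| ^ p) := by
        gcongr
        rw [hc, abs_sub_eq_abs_add_abs_of_mul_nonpos hUV]
        exact add_mul_rpow_le_rpow_sub_one_mul hp (abs_nonneg U) (abs_nonneg V) (abs_nonneg t)
    _ = c * (|U| + |V|) + -(c * |V|) := by ring
end

section
/- Let 1 < p < ∞. There exists a constant c_p > 0 such that for all real numbers a, b: |a − b|^p ≤ |a|^p + |b|^p + c_p·(|a|^2 + |b|^2)^{(p−2)/2}·|a·b|. -/
/-! For `0 ≤ t ≤ s`, Bernoulli's inequality gives `(s + t)^p - s^p ≤ p (s + t)^(p-1) t`,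
and `(s + t)^(p-1) ≤ 2^(p-1) s^(p-2) · s`. Since `s^2 ≤ s^2 + t^2 ≤ 2 s^2`, the factor
`s^(p-2)` is at most `2 (s^2 + t^2)^((p-2)/2)` whatever the sign of `p - 2`.
Finally `|a - b| ≤ |a| + |b|`. -/

open Real

namespace Real

lemma add_rpow_sub_rpow_le {p s t : ℝ} (hp : 1 ≤ p) (hs : 0 ≤ s) (hst : 0 < s + t) :
    (s + t) ^ p - s ^ p ≤ p * (s + t) ^ (p - 1) * t := by
  have hbern := one_add_mul_self_le_rpow_one_add (s := -(t / (s + t)))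
    (by rw [neg_le_neg_iff, div_le_one hst]; linarith) hp
  rw [show 1 + -(t / (s + t)) = s / (s + t) by field_simp; ring, div_rpow hs hst.le,
    le_div_iff₀ (by positivity)] at hbern
  rw [rpow_sub_one hst.ne']
  have hexpand : (1 + p * -(t / (s + t))) * (s + t) ^ p =
      (s + t) ^ p - p * ((s + t) ^ p / (s + t)) * t := by
    field_simp
    ring
  linarith

lemma rpow_le_two_mul_add_rpow {x y e : ℝ} (hx : 0 < x) (hy : 0 ≤ y) (hyx : y ≤ x)
    (he : -1 ≤ e) : x ^ e ≤ 2 * (x + y) ^ e := by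
  rcases le_total 0 e with he0 | he0
  · have hmono : x ^ e ≤ (x + y) ^ e := rpow_le_rpow hx.le (le_add_of_nonneg_right hy) he0
    linarith [rpow_nonneg (hx.le.trans (le_add_of_nonneg_right hy)) e]
  · have h_half : (2 : ℝ) ^ (-1 : ℝ) ≤ 2 ^ e := rpow_le_rpow_of_exponent_le (by norm_num) he
    rw [rpow_neg_one] at h_half
    calc x ^ e ≤ 2 * (2 ^ e * x ^ e) := by nlinarith [rpow_pos_of_pos hx e]
      _ = 2 * (2 * x) ^ e := by rw [mul_rpow zero_le_two hx.le]
      _ ≤ 2 * (x + y) ^ e := by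
        gcongr 2 * ?_
        exact rpow_le_rpow_of_nonpos (by positivity) (by linarith) he0

lemma add_rpow_le_rpow_add_of_le {p s t : ℝ} (hp : 1 ≤ p) (ht : 0 ≤ t) (hts : t ≤ s) :
    (s + t) ^ p ≤ s ^ p + p * 2 ^ p * (s ^ 2 + t ^ 2) ^ ((p - 2) / 2) * (s * t) := by
  rcases ht.eq_or_lt with rfl | ht'
  · simp
  have hs : 0 < s := ht'.trans_le hts
  have hsp : s ^ (p - 1) = (s ^ 2) ^ ((p - 2) / 2) * s := by
    rw [← rpow_natCast_mul hs.le, ← rpow_add_one hs.ne']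
    congr 1
    push_cast
    ring
  have h2p : (2 : ℝ) ^ p = 2 ^ (p - 1) * 2 := by
    rw [← rpow_add_one two_ne_zero]
    ring_nf
  calc (s + t) ^ p ≤ s ^ p + p * (s + t) ^ (p - 1) * t := by
        linarith [add_rpow_sub_rpow_le (t := t) hp hs.le (by linarith)]
    _ ≤ s ^ p + p * (2 * s) ^ (p - 1) * t := by
        gcongr
        linarith
    _ = s ^ p + p * 2 ^ (p - 1) * (s ^ 2) ^ ((p - 2) / 2) * (s * t) := by
        rw [mul_rpow zero_le_two hs.le, hsp]
        ring
    _ ≤ s ^ p + p * 2 ^ (p - 1) * (2 * (s ^ 2 + t ^ 2) ^ ((p - 2) / 2)) * (s * t) := by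
        gcongr
        exact rpow_le_two_mul_add_rpow (by positivity) (by positivity) (by nlinarith) (by linarith)
    _ = s ^ p + p * 2 ^ p * (s ^ 2 + t ^ 2) ^ ((p - 2) / 2) * (s * t) := by
        rw [h2p]
        ring

lemma add_rpow_le_rpow_add_rpow_add {p s t : ℝ} (hp : 1 ≤ p) (hs : 0 ≤ s) (ht : 0 ≤ t) :
    (s + t) ^ p ≤ s ^ p + t ^ p + p * 2 ^ p * (s ^ 2 + t ^ 2) ^ ((p - 2) / 2) * (s * t) := by
  wlog hts : t ≤ s generalizing s t
  · have := this ht hs (le_of_not_ge hts)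
    rw [add_comm t, add_comm (t ^ 2), mul_comm t] at this
    linarith
  linarith [add_rpow_le_rpow_add_of_le hp ht hts, rpow_nonneg ht p]

end Real

theorem stmt1 (p : ℝ) (hp : 1 < p) :
    ∃ c : ℝ, 0 < c ∧ ∀ a b : ℝ,
      |a - b| ^ p ≤ |a| ^ p + |b| ^ p +
        c * (|a| ^ (2 : ℝ) + |b| ^ (2 : ℝ)) ^ ((p - 2) / 2) * |a * b| := by
  refine ⟨p * 2 ^ p, by positivity, fun a b => ?_⟩
  have h_triangle : |a - b| ^ p ≤ (|a| + |b|) ^ p :=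
    rpow_le_rpow (abs_nonneg _) (abs_sub _ _) (by linarith)
  rw [rpow_two, rpow_two, abs_mul]
  linarith [add_rpow_le_rpow_add_rpow_add hp.le (abs_nonneg a) (abs_nonneg b)]
end

section
/- Let p > 2 and let a, b be real numbers with a·b ≤ 0. Then |a − b|^{p−2}(a − b)·a ≥ |a|^p − (p − 1)·|a|^{p−2}·b·a. -/
/-!
Both sides are invariant under `(a, b) ↦ (-a, -b)`, so we may take `a > 0 ≥ b`. Dividing by `a`,
the inequality becomes `a ^ (p - 1) + (p - 1) a ^ (p - 2) (-b) ≤ (a - b) ^ (p - 1)`: the graph of the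
convex function `t ↦ t ^ (p - 1)` lies above its tangent at `a`, which is Bernoulli's inequality
for `(1 + (-b) / a) ^ (p - 1)`.
-/

open Real

lemma rpow_sub_one_mul_self {x : ℝ} (hx : x ≠ 0) (r : ℝ) : x ^ (r - 1) * x = x ^ r := by
  rw [rpow_sub_one hx]; field_simp

lemma rpow_add_tangent_le {q x y : ℝ} (hq : 1 ≤ q) (hx : 0 < x) (hy : 0 ≤ y) :
    x ^ q + q * x ^ (q - 1) * y ≤ (x + y) ^ q := by
  have hyx : 0 ≤ y / x := div_nonneg hy hx.le
  have bernoulli : 1 + q * (y / x) ≤ (1 + y / x) ^ q :=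
    one_add_mul_self_le_rpow_one_add (by linarith) hq
  calc x ^ q + q * x ^ (q - 1) * y = x ^ q * (1 + q * (y / x)) := by
        rw [← rpow_sub_one_mul_self hx.ne' q]; field_simp
    _ ≤ x ^ q * (1 + y / x) ^ q := by gcongr
    _ = (x + y) ^ q := by
        rw [← mul_rpow hx.le (by positivity)]; congr 1; field_simp

lemma signed_rpow_ineq_of_pos {p a b : ℝ} (hp : 2 ≤ p) (ha : 0 < a) (hb : b ≤ 0) :
    |a| ^ p - (p - 1) * |a| ^ (p - 2) * b * a ≤ |a - b| ^ (p - 2) * (a - b) * a := by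
  have hab : 0 < a - b := by linarith
  have tangent := rpow_add_tangent_le (q := p - 1) (by linarith) ha (neg_nonneg.mpr hb)
  have ha_pow : a ^ (p - 1) * a = a ^ p := rpow_sub_one_mul_self ha.ne' p
  have hab_pow : (a - b) ^ (p - 2) * (a - b) = (a - b) ^ (p - 1) := by
    rw [show p - 2 = p - 1 - 1 by ring, rpow_sub_one_mul_self hab.ne']
  rw [abs_of_pos ha, abs_of_pos hab, hab_pow, ← ha_pow]
  rw [← sub_eq_add_neg, show p - 1 - 1 = p - 2 by ring] at tangent
  linarith [mul_le_mul_of_nonneg_right tangent ha.le]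

theorem stmt2 (p a b : ℝ) (hp : 2 < p) (hab : a * b ≤ 0) :
    |a| ^ p - (p - 1) * |a| ^ (p - 2) * b * a ≤ |a - b| ^ (p - 2) * (a - b) * a := by
  rcases lt_trichotomy a 0 with ha | rfl | ha
  · have h := signed_rpow_ineq_of_pos hp.le (neg_pos.mpr ha) (b := -b) (by nlinarith)
    rw [abs_neg, neg_sub_neg, abs_sub_comm] at h
    linarith
  · simp [zero_rpow (by linarith : p ≠ 0)]
  · exact signed_rpow_ineq_of_pos hp.le ha (by nlinarith)
end

section
/- Let 1 < p < 2 and let a, b be real numbers with a·b ≤ 0. Then |a − b|^{p−2}(a − b)·a ≥ |a|^p − (p − 1)·|a − b|^{p−2}·b·a. -/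
/-!
For `a > 0 ≥ b` put `d = a - b > 0`. Since `d + (p - 1) b = (p - 1) a + (2 - p) d`, the inequality
becomes `a ^ p ≤ d ^ (p - 2) a ((p - 1) a + (2 - p) d)`, which is the weighted AM–GM inequality
`a ^ (p - 1) d ^ (2 - p) ≤ (p - 1) a + (2 - p) d` multiplied by `a d ^ (p - 2)`. Both sides are
invariant under `(a, b) ↦ (-a, -b)`, which reduces the case `a < 0` to this one.
-/

lemma rpow_le_rpow_sub_two_mul_weighted_mean {p a d : ℝ} (hp1 : 1 ≤ p) (hp2 : p ≤ 2)
    (ha : 0 ≤ a) (hd : 0 < d) :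
    a ^ p ≤ d ^ (p - 2) * a * ((p - 1) * a + (2 - p) * d) := by
  have amgm : a ^ (p - 1) * d ^ (2 - p) ≤ (p - 1) * a + (2 - p) * d :=
    Real.geom_mean_le_arith_mean2_weighted (by linarith) (by linarith) ha hd.le (by ring)
  have hd_cancel : d ^ (p - 2) * d ^ (2 - p) = 1 := by
    rw [← Real.rpow_add hd]
    simp
  calc a ^ p = a ^ (1 + (p - 1)) := by ring_nf
    _ = d ^ (p - 2) * a * (a ^ (p - 1) * d ^ (2 - p)) := by
      rw [Real.rpow_add' ha (by linarith), Real.rpow_one]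
      linear_combination (-(a * a ^ (p - 1))) * hd_cancel
    _ ≤ d ^ (p - 2) * a * ((p - 1) * a + (2 - p) * d) := by gcongr

lemma abs_rpow_sub_le_rpow_sub_mul_of_pos_of_nonpos {p a b : ℝ} (hp1 : 1 ≤ p) (hp2 : p ≤ 2)
    (ha : 0 < a) (hb : b ≤ 0) :
    |a| ^ p - (p - 1) * |a - b| ^ (p - 2) * b * a ≤ |a - b| ^ (p - 2) * (a - b) * a := by
  rw [abs_of_pos ha, abs_of_pos (by linarith : 0 < a - b)]
  have h := rpow_le_rpow_sub_two_mul_weighted_mean hp1 hp2 ha.le (by linarith : 0 < a - b)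
  linear_combination h

theorem stmt3 (p a b : ℝ) (hp1 : 1 < p) (hp2 : p < 2) (hab : a * b ≤ 0) :
    |a| ^ p - (p - 1) * |a - b| ^ (p - 2) * b * a ≤ |a - b| ^ (p - 2) * (a - b) * a := by
  rcases lt_trichotomy a 0 with ha | rfl | ha
  · have h := abs_rpow_sub_le_rpow_sub_mul_of_pos_of_nonpos (a := -a) (b := -b) hp1.le hp2.le
      (by linarith) (by nlinarith)
    rw [abs_neg, neg_sub_neg, abs_sub_comm] at h
    linear_combination h
  · simp [Real.zero_rpow (by linarith : p ≠ 0)]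
  · exact abs_rpow_sub_le_rpow_sub_mul_of_pos_of_nonpos hp1.le hp2.le ha (by nlinarith)
end

section
/- Let p ≥ 1, t ∈ [0,1], and let J : ℝ^N → ℝ be a nonnegative measurable function. For nonnegative measurable functions u, v : ℝ^N → ℝ, define σ_t(x) = ((1−t)v(x)^p + t u(x)^p)^{1/p}. Then ∫∫ |σ_t(x) − σ_t(y)|^p J(x−y) dx dy ≤ (1−t) ∫∫ |v(x) − v(y)|^p J(x−y) dx dy + t ∫∫ |u(x) − u(y)|^p J(x−y) dx dy. -/
/-! For `s, t ≥ 0` the weighted mean `(s |x|^p + t |y|^p)^(1/p)` is the `ℓ^p` norm of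
`(s^(1/p) x, t^(1/p) y)`, so the reverse triangle inequality bounds
`|σ_t(x) - σ_t(y)|^p` pointwise by `(1-t) |v x - v y|^p + t |u x - u y|^p`.
Multiplying by `J (x - y)` and integrating gives the theorem. -/

open MeasureTheory

lemma norm_toLp_fin_two {p : ENNReal} [Fact (1 ≤ p)] (hp : 0 < p.toReal) (a b : ℝ) :
    ‖WithLp.toLp p ![a, b]‖ = (|a| ^ p.toReal + |b| ^ p.toReal) ^ (1 / p.toReal) := by
  simp [PiLp.norm_eq_sum hp, Fin.sum_univ_two]

lemma abs_rpow_inv_mul_rpow {p s : ℝ} (hp : p ≠ 0) (hs : 0 ≤ s) (x : ℝ) :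
    |s ^ (1 / p) * x| ^ p = s * |x| ^ p := by
  rw [abs_mul, Real.mul_rpow (abs_nonneg _) (abs_nonneg _), abs_of_nonneg (by positivity),
    one_div, Real.rpow_inv_rpow hs hp]

lemma abs_sub_weighted_rpow_mean_le {p s t : ℝ} (hp : 1 ≤ p) (hs : 0 ≤ s) (ht : 0 ≤ t)
    (a b c d : ℝ) :
    |(s * |a| ^ p + t * |c| ^ p) ^ (1 / p) - (s * |b| ^ p + t * |d| ^ p) ^ (1 / p)| ≤
      (s * |a - b| ^ p + t * |c - d| ^ p) ^ (1 / p) := by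
  have : Fact (1 ≤ ENNReal.ofReal p) := ⟨by simpa using ENNReal.ofReal_le_ofReal hp⟩
  have hp_toReal : (ENNReal.ofReal p).toReal = p := ENNReal.toReal_ofReal (by linarith)
  have mean_eq_norm : ∀ x y : ℝ, (s * |x| ^ p + t * |y| ^ p) ^ (1 / p) =
      ‖WithLp.toLp (ENNReal.ofReal p) ![s ^ (1 / p) * x, t ^ (1 / p) * y]‖ := by
    intro x y
    rw [norm_toLp_fin_two (by linarith), hp_toReal,
      abs_rpow_inv_mul_rpow (by linarith) hs, abs_rpow_inv_mul_rpow (by linarith) ht]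
  have toLp_sub : WithLp.toLp (ENNReal.ofReal p) ![s ^ (1 / p) * (a - b), t ^ (1 / p) * (c - d)] =
      WithLp.toLp _ ![s ^ (1 / p) * a, t ^ (1 / p) * c] -
        WithLp.toLp _ ![s ^ (1 / p) * b, t ^ (1 / p) * d] := by
    rw [← WithLp.toLp_sub]
    simp [mul_sub]
  rw [mean_eq_norm, mean_eq_norm, mean_eq_norm, toLp_sub]
  exact abs_norm_sub_norm_le _ _

lemma abs_sub_weighted_rpow_mean_rpow_le {p s t a b c d : ℝ} (hp : 1 ≤ p) (hs : 0 ≤ s)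
    (ht : 0 ≤ t) (ha : 0 ≤ a) (hb : 0 ≤ b) (hc : 0 ≤ c) (hd : 0 ≤ d) :
    |(s * a ^ p + t * c ^ p) ^ (1 / p) - (s * b ^ p + t * d ^ p) ^ (1 / p)| ^ p ≤
      s * |a - b| ^ p + t * |c - d| ^ p := by
  have h := abs_sub_weighted_rpow_mean_le hp hs ht a b c d
  rw [abs_of_nonneg ha, abs_of_nonneg hb, abs_of_nonneg hc, abs_of_nonneg hd] at h
  calc _ ≤ ((s * |a - b| ^ p + t * |c - d| ^ p) ^ (1 / p)) ^ p :=
        Real.rpow_le_rpow (abs_nonneg _) h (by linarith)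
    _ = s * |a - b| ^ p + t * |c - d| ^ p := by
        rw [one_div, Real.rpow_inv_rpow (by positivity) (by linarith)]

lemma lintegral_lintegral_le_const_mul_add {α β : Type*} [MeasurableSpace α]
    [MeasurableSpace β] {μ : Measure α} {ν : Measure β} [SFinite ν] {F G H : α → β → ENNReal}
    {a b : ENNReal} (ha : a ≠ ⊤) (hb : b ≠ ⊤) (hG : Measurable (Function.uncurry G))
    (h : ∀ x y, F x y ≤ a * G x y + b * H x y) :
    ∫⁻ x, ∫⁻ y, F x y ∂ν ∂μ ≤ a * ∫⁻ x, ∫⁻ y, G x y ∂ν ∂μ + b * ∫⁻ x, ∫⁻ y, H x y ∂ν ∂μ := by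
  calc ∫⁻ x, ∫⁻ y, F x y ∂ν ∂μ ≤ ∫⁻ x, ∫⁻ y, a * G x y + b * H x y ∂ν ∂μ :=
        lintegral_mono fun x ↦ lintegral_mono (h x)
    _ = ∫⁻ x, a * ∫⁻ y, G x y ∂ν + b * ∫⁻ y, H x y ∂ν ∂μ := by
        refine lintegral_congr fun x ↦ ?_
        have hGx : Measurable (G x) := hG.comp measurable_prodMk_left
        rw [lintegral_add_left (hGx.const_mul a),
          lintegral_const_mul' _ _ ha, lintegral_const_mul' _ _ hb]
    _ = _ := by
        have hG' : Measurable fun x ↦ ∫⁻ y, G x y ∂ν := hG.lintegral_prod_right'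
        rw [lintegral_add_left (hG'.const_mul a),
          lintegral_const_mul' _ _ ha, lintegral_const_mul' _ _ hb]

theorem stmt5_general (N : ℕ) (p t : ℝ) (hp : 1 ≤ p) (ht : t ∈ Set.Icc (0 : ℝ) 1)
    (J u v : EuclideanSpace ℝ (Fin N) → ℝ)
    (hJm : Measurable J)
    (hu0 : ∀ x, 0 ≤ u x)
    (hvm : Measurable v) (hv0 : ∀ x, 0 ≤ v x) :
    (∫⁻ x, ∫⁻ y, ENNReal.ofReal
        (|((1 - t) * v x ^ p + t * u x ^ p) ^ (1 / p) -
            ((1 - t) * v y ^ p + t * u y ^ p) ^ (1 / p)| ^ p * J (x - y))) ≤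
      ENNReal.ofReal (1 - t) *
          (∫⁻ x, ∫⁻ y, ENNReal.ofReal (|v x - v y| ^ p * J (x - y))) +
        ENNReal.ofReal t *
          (∫⁻ x, ∫⁻ y, ENNReal.ofReal (|u x - u y| ^ p * J (x - y))) := by
  obtain ⟨ht0, ht1⟩ := ht
  refine lintegral_lintegral_le_const_mul_add ENNReal.ofReal_ne_top ENNReal.ofReal_ne_top
    (by fun_prop) fun x y ↦ ?_
  have pointwise := abs_sub_weighted_rpow_mean_rpow_le hp (sub_nonneg.2 ht1) ht0
    (hv0 x) (hv0 y) (hu0 x) (hu0 y)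
  rw [ENNReal.ofReal_mul (by positivity), ENNReal.ofReal_mul (by positivity),
    ENNReal.ofReal_mul (by positivity), ← mul_assoc, ← mul_assoc, ← add_mul]
  gcongr
  rw [← ENNReal.ofReal_mul (sub_nonneg.2 ht1), ← ENNReal.ofReal_mul ht0,
    ← ENNReal.ofReal_add (by positivity) (by positivity)]
  exact ENNReal.ofReal_le_ofReal pointwise

theorem stmt5 (N : ℕ) (p t : ℝ) (hp : 1 ≤ p) (ht : t ∈ Set.Icc (0 : ℝ) 1)
    (J u v : EuclideanSpace ℝ (Fin N) → ℝ)
    (hJm : Measurable J) (hJ0 : ∀ x, 0 ≤ J x)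
    (hum : Measurable u) (hu0 : ∀ x, 0 ≤ u x)
    (hvm : Measurable v) (hv0 : ∀ x, 0 ≤ v x) :
    (∫⁻ x, ∫⁻ y, ENNReal.ofReal
        (|((1 - t) * v x ^ p + t * u x ^ p) ^ (1 / p) -
            ((1 - t) * v y ^ p + t * u y ^ p) ^ (1 / p)| ^ p * J (x - y))) ≤
      ENNReal.ofReal (1 - t) *
          (∫⁻ x, ∫⁻ y, ENNReal.ofReal (|v x - v y| ^ p * J (x - y))) +
        ENNReal.ofReal t *
          (∫⁻ x, ∫⁻ y, ENNReal.ofReal (|u x - u y| ^ p * J (x - y))) :=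
  stmt5_general N p t hp ht J u v hJm hu0 hvm hv0
end

section
/- Let p ≥ 2 and let a, b be real numbers. Then 2^{p−2}·(|a|^{p−2}a − |b|^{p−2}b)·(a − b) ≥ |a − b|^p. -/
/-!
Write `φ(x) = |x|^r x` with `r = p - 2 ≥ 0`. By symmetry of both sides we may assume `b ≤ a`, and
it suffices to show `(a - b)^(r+1) ≤ 2^r (φ a - φ b)`, then multiply by `a - b`. If `a` and `b`
have the same sign (by oddness of `φ`, both nonnegative) this is superadditivity of `t ↦ t^(r+1)`,
`(a - b)^(r+1) + b^(r+1) ≤ a^(r+1)`, together with `1 ≤ 2^r`. If `b ≤ 0 ≤ a` it is the power mean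
inequality `(a + |b|)^(r+1) ≤ 2^r (a^(r+1) + |b|^(r+1))`.
-/

namespace Real

lemma rpow_add_le_two_rpow_mul_add_rpow {q a b : ℝ} (ha : 0 ≤ a) (hb : 0 ≤ b) (hq : 1 ≤ q) :
    (a + b) ^ q ≤ 2 ^ (q - 1) * (a ^ q + b ^ q) := by
  lift a to NNReal using ha
  lift b to NNReal using hb
  exact_mod_cast NNReal.rpow_add_le_mul_rpow_add_rpow a b hq

end Real

noncomputable def signedRpow (r x : ℝ) : ℝ := |x| ^ r * x

lemma signedRpow_of_nonneg {r x : ℝ} (hr : 0 ≤ r) (hx : 0 ≤ x) :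
    signedRpow r x = x ^ (r + 1) := by
  rw [signedRpow, abs_of_nonneg hx, Real.rpow_add' hx (by linarith), Real.rpow_one]

lemma signedRpow_neg (r x : ℝ) : signedRpow r (-x) = -signedRpow r x := by
  simp only [signedRpow, abs_neg, mul_neg]

lemma sub_rpow_le_two_rpow_mul_signedRpow_sub_of_nonneg {r a b : ℝ} (hr : 0 ≤ r) (hb : 0 ≤ b)
    (hba : b ≤ a) : (a - b) ^ (r + 1) ≤ 2 ^ r * (signedRpow r a - signedRpow r b) := by
  rw [signedRpow_of_nonneg hr (hb.trans hba), signedRpow_of_nonneg hr hb]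
  have superadd : (a - b) ^ (r + 1) + b ^ (r + 1) ≤ a ^ (r + 1) := by
    simpa using Real.add_rpow_le_rpow_add (sub_nonneg.2 hba) hb (by linarith : 1 ≤ r + 1)
  calc (a - b) ^ (r + 1) ≤ a ^ (r + 1) - b ^ (r + 1) := by linarith
    _ ≤ 2 ^ r * (a ^ (r + 1) - b ^ (r + 1)) :=
      le_mul_of_one_le_left (by linarith [Real.rpow_nonneg (sub_nonneg.2 hba) (r + 1)])
        (Real.one_le_rpow one_le_two hr)

lemma sub_rpow_le_two_rpow_mul_signedRpow_sub_of_nonpos_of_nonneg {r a b : ℝ} (hr : 0 ≤ r)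
    (hb : b ≤ 0) (ha : 0 ≤ a) :
    (a - b) ^ (r + 1) ≤ 2 ^ r * (signedRpow r a - signedRpow r b) := by
  have hb' : 0 ≤ -b := neg_nonneg.2 hb
  rw [← neg_neg b, signedRpow_neg, signedRpow_of_nonneg hr ha, signedRpow_of_nonneg hr hb',
    sub_neg_eq_add, sub_neg_eq_add]
  simpa using Real.rpow_add_le_two_rpow_mul_add_rpow ha hb' (by linarith : 1 ≤ r + 1)

lemma sub_rpow_le_two_rpow_mul_signedRpow_sub {r a b : ℝ} (hr : 0 ≤ r) (hba : b ≤ a) :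
    (a - b) ^ (r + 1) ≤ 2 ^ r * (signedRpow r a - signedRpow r b) := by
  rcases le_total 0 b with hb | hb
  · exact sub_rpow_le_two_rpow_mul_signedRpow_sub_of_nonneg hr hb hba
  rcases le_total a 0 with ha | ha
  · have := sub_rpow_le_two_rpow_mul_signedRpow_sub_of_nonneg hr (neg_nonneg.2 ha) (neg_le_neg hba)
    rwa [signedRpow_neg, signedRpow_neg, neg_sub_neg, neg_sub_neg] at this
  · exact sub_rpow_le_two_rpow_mul_signedRpow_sub_of_nonpos_of_nonneg hr hb ha

lemma abs_sub_rpow_le_two_rpow_mul_signedRpow_sub_mul_sub {r a b : ℝ} (hr : 0 ≤ r) (hba : b ≤ a) :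
    |a - b| ^ (r + 2) ≤ 2 ^ r * ((signedRpow r a - signedRpow r b) * (a - b)) := by
  have hab : 0 ≤ a - b := sub_nonneg.2 hba
  rw [abs_of_nonneg hab, show r + 2 = (r + 1) + 1 by ring, Real.rpow_add' hab (by linarith),
    Real.rpow_one, ← mul_assoc]
  exact mul_le_mul_of_nonneg_right (sub_rpow_le_two_rpow_mul_signedRpow_sub hr hba) hab

theorem stmt7 (p a b : ℝ) (hp : 2 ≤ p) :
    |a - b| ^ p ≤ (2 : ℝ) ^ (p - 2) * ((|a| ^ (p - 2) * a - |b| ^ (p - 2) * b) * (a - b)) := by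
  obtain ⟨r, hr, rfl⟩ : ∃ r, 0 ≤ r ∧ p = r + 2 := ⟨p - 2, by linarith, by ring⟩
  show |a - b| ^ (r + 2) ≤ 2 ^ (r + 2 - 2) * ((signedRpow (r + 2 - 2) a
    - signedRpow (r + 2 - 2) b) * (a - b))
  rw [add_sub_cancel_right]
  rcases le_total b a with hba | hab
  · exact abs_sub_rpow_le_two_rpow_mul_signedRpow_sub_mul_sub hr hba
  · rw [abs_sub_comm, ← neg_sub b a, ← neg_sub (signedRpow r b), neg_mul_neg]
    exact abs_sub_rpow_le_two_rpow_mul_signedRpow_sub_mul_sub hr hab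
end

section
/- Let 1 < r < 2. There exists a constant C_r > 0 such that for all real numbers a, b: |a − b|^r ≤ C_r · ((|a|^{r−2}a − |b|^{r−2}b)·(a − b))^{r/2} · (|a|^r + |b|^r)^{(2−r)/2}. -/
/-!
With `φ t = |t| ^ (r - 2) * t` and `x = |a| + |b|`, the heart of the matter is the strong
monotonicity bound `(r - 1) (a - b)² x ^ (r - 2) ≤ (φ a - φ b) (a - b)`: for `a`, `b` of equal
sign it follows from the concavity of `t ↦ t ^ (r - 1)` (its tangent at the larger point lies
above the graph), for opposite signs from the subadditivity of `t ↦ t ^ (r - 1)`. Splitting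
`|a - b| ^ r = ((a - b)² x ^ (r - 2)) ^ (r / 2) · (x ^ r) ^ ((2 - r) / 2)` and bounding
`x ^ r ≤ 2 ^ (r - 1) (|a| ^ r + |b| ^ r)` gives the claim with
`C = (2 ^ (r - 1)) ^ ((2 - r) / 2) / (r - 1) ^ (r / 2)`.
-/

open Real

namespace Real

lemma rpow_add_le_mul_rpow_add_rpow {a b p : ℝ} (ha : 0 ≤ a) (hb : 0 ≤ b) (hp : 1 ≤ p) :
    (a + b) ^ p ≤ 2 ^ (p - 1) * (a ^ p + b ^ p) := by
  lift a to NNReal using ha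
  lift b to NNReal using hb
  exact_mod_cast NNReal.rpow_add_le_mul_rpow_add_rpow a b hp

lemma rpow_le_rpow_add_mul_sub_mul_rpow_sub_one {a b p : ℝ} (ha : 0 < a) (hb : 0 ≤ b)
    (hp0 : 0 ≤ p) (hp1 : p ≤ 1) :
    b ^ p ≤ a ^ p + p * (b - a) * a ^ (p - 1) := by
  have hbernoulli : (1 + (b / a - 1)) ^ p ≤ 1 + p * (b / a - 1) :=
    rpow_one_add_le_one_add_mul_self (by linarith [div_nonneg hb ha.le]) hp0 hp1
  rw [add_sub_cancel, div_rpow hb ha.le, div_le_iff₀ (rpow_pos_of_pos ha p)] at hbernoulli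
  rw [rpow_sub_one ha.ne']
  calc b ^ p ≤ (1 + p * (b / a - 1)) * a ^ p := hbernoulli
    _ = a ^ p + p * (b - a) * (a ^ p / a) := by field_simp

end Real

lemma rpow_sub_two_mul_self {r t : ℝ} (hr : r ≠ 1) (ht : 0 ≤ t) :
    t ^ (r - 2) * t = t ^ (r - 1) := by
  rw [← rpow_add_one' ht (by contrapose! hr; linarith)]
  ring_nf

lemma abs_rpow_sub_two_mul_self_of_nonneg {r t : ℝ} (hr : r ≠ 1) (ht : 0 ≤ t) :
    |t| ^ (r - 2) * t = t ^ (r - 1) := by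
  rw [abs_of_nonneg ht, rpow_sub_two_mul_self hr ht]

lemma abs_rpow_sub_two_mul_self_of_nonpos {r t : ℝ} (hr : r ≠ 1) (ht : t ≤ 0) :
    |t| ^ (r - 2) * t = -(-t) ^ (r - 1) := by
  rw [← abs_rpow_sub_two_mul_self_of_nonneg hr (neg_nonneg.mpr ht), abs_neg]
  ring

lemma mul_sub_mul_add_rpow_le_rpow_sub_rpow {r a b : ℝ} (hr1 : 1 < r) (hr2 : r ≤ 2)
    (hb : 0 ≤ b) (hba : b ≤ a) :
    (r - 1) * (a - b) * (a + b) ^ (r - 2) ≤ a ^ (r - 1) - b ^ (r - 1) := by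
  rcases (hb.trans hba).eq_or_lt with rfl | ha
  · obtain rfl : b = 0 := le_antisymm hba hb
    simp
  have htangent :=
    rpow_le_rpow_add_mul_sub_mul_rpow_sub_one (p := r - 1) ha hb (by linarith) (by linarith)
  have hdecr : (a + b) ^ (r - 2) ≤ a ^ (r - 2) :=
    rpow_le_rpow_of_nonpos ha (by linarith) (by linarith)
  rw [show r - 1 - 1 = r - 2 by ring] at htangent
  calc (r - 1) * (a - b) * (a + b) ^ (r - 2) ≤ (r - 1) * (a - b) * a ^ (r - 2) :=
        mul_le_mul_of_nonneg_left hdecr (mul_nonneg (by linarith) (by linarith))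
    _ ≤ a ^ (r - 1) - b ^ (r - 1) := by linarith

lemma mul_add_mul_add_rpow_le_rpow_add_rpow {r a c : ℝ} (hr1 : 1 < r) (hr2 : r ≤ 2)
    (ha : 0 ≤ a) (hc : 0 ≤ c) :
    (r - 1) * (a + c) * (a + c) ^ (r - 2) ≤ a ^ (r - 1) + c ^ (r - 1) := by
  have hac : 0 ≤ a + c := add_nonneg ha hc
  rw [mul_assoc, mul_comm (a + c), rpow_sub_two_mul_self hr1.ne' hac]
  calc (r - 1) * (a + c) ^ (r - 1) ≤ 1 * (a + c) ^ (r - 1) :=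
        mul_le_mul_of_nonneg_right (by linarith) (rpow_nonneg hac _)
    _ ≤ a ^ (r - 1) + c ^ (r - 1) := by
        rw [one_mul]; exact rpow_add_le_add_rpow ha hc (by linarith) (by linarith)

lemma mul_sq_mul_abs_add_abs_rpow_le {r : ℝ} (hr1 : 1 < r) (hr2 : r ≤ 2) (a b : ℝ) :
    (r - 1) * (a - b) ^ 2 * (|a| + |b|) ^ (r - 2) ≤
      (|a| ^ (r - 2) * a - |b| ^ (r - 2) * b) * (a - b) := by
  wlog hba : b ≤ a generalizing a b with H
  · rw [add_comm]
    linear_combination H b a (le_of_not_ge hba)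
  have hr : r ≠ 1 := hr1.ne'
  have hab : 0 ≤ a - b := sub_nonneg.mpr hba
  rw [sq, ← mul_assoc, mul_right_comm]
  refine mul_le_mul_of_nonneg_right ?_ hab
  rcases le_total 0 b with hb | hb
  · rw [abs_rpow_sub_two_mul_self_of_nonneg hr (hb.trans hba),
      abs_rpow_sub_two_mul_self_of_nonneg hr hb, abs_of_nonneg (hb.trans hba), abs_of_nonneg hb]
    exact mul_sub_mul_add_rpow_le_rpow_sub_rpow hr1 hr2 hb hba
  rcases le_total 0 a with ha | ha
  · rw [abs_rpow_sub_two_mul_self_of_nonneg hr ha, abs_rpow_sub_two_mul_self_of_nonpos hr hb,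
      abs_of_nonneg ha, abs_of_nonpos hb, sub_neg_eq_add, sub_eq_add_neg a b]
    exact mul_add_mul_add_rpow_le_rpow_add_rpow hr1 hr2 ha (neg_nonneg.mpr hb)
  · rw [abs_rpow_sub_two_mul_self_of_nonpos hr ha, abs_rpow_sub_two_mul_self_of_nonpos hr hb,
      abs_of_nonpos ha, abs_of_nonpos hb, add_comm (-a)]
    linear_combination
      mul_sub_mul_add_rpow_le_rpow_sub_rpow hr1 hr2 (neg_nonneg.mpr ha) (neg_le_neg hba)

lemma abs_rpow_eq_sq_mul_rpow_mul_rpow {x : ℝ} (hx : 0 < x) (y r : ℝ) :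
    |y| ^ r = (y ^ 2 * x ^ (r - 2)) ^ (r / 2) * (x ^ r) ^ ((2 - r) / 2) := by
  rw [← sq_abs, ← rpow_two, mul_rpow (by positivity) (by positivity),
    ← rpow_mul (abs_nonneg _), ← rpow_mul hx.le, ← rpow_mul hx.le, mul_assoc, ← rpow_add hx,
    show 2 * (r / 2) = r by ring, show (r - 2) * (r / 2) + r * ((2 - r) / 2) = 0 by ring,
    rpow_zero, mul_one]

theorem stmt8 (r : ℝ) (hr1 : 1 < r) (hr2 : r < 2) :
    ∃ C : ℝ, 0 < C ∧ ∀ a b : ℝ,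
      |a - b| ^ r ≤ C * ((|a| ^ (r - 2) * a - |b| ^ (r - 2) * b) * (a - b)) ^ (r / 2) *
        (|a| ^ r + |b| ^ r) ^ ((2 - r) / 2) := by
  have hr : 0 < r - 1 := by linarith
  refine ⟨(2 ^ (r - 1)) ^ ((2 - r) / 2) / (r - 1) ^ (r / 2), by positivity, fun a b => ?_⟩
  rcases eq_or_ne a b with rfl | hab
  · simp [zero_rpow (show r ≠ 0 by linarith), zero_rpow (show r / 2 ≠ 0 by linarith)]
  have hx : 0 < |a| + |b| := (abs_pos.mpr (sub_ne_zero.mpr hab)).trans_le (abs_sub a b)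
  have hmono := mul_sq_mul_abs_add_abs_rpow_le hr1 hr2.le a b
  set D := (|a| ^ (r - 2) * a - |b| ^ (r - 2) * b) * (a - b)
  have hD : 0 ≤ D :=
    (mul_nonneg (mul_nonneg hr.le (sq_nonneg _)) (rpow_nonneg hx.le _)).trans hmono
  have hdiv : (a - b) ^ 2 * (|a| + |b|) ^ (r - 2) ≤ D / (r - 1) :=
    (le_div_iff₀ hr).mpr (by linarith)
  have hS : 0 ≤ |a| ^ r + |b| ^ r := by positivity
  have hsum := rpow_add_le_mul_rpow_add_rpow (abs_nonneg a) (abs_nonneg b) hr1.le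
  calc |a - b| ^ r = ((a - b) ^ 2 * (|a| + |b|) ^ (r - 2)) ^ (r / 2) *
        ((|a| + |b|) ^ r) ^ ((2 - r) / 2) := abs_rpow_eq_sq_mul_rpow_mul_rpow hx _ _
    _ ≤ (D / (r - 1)) ^ (r / 2) * (2 ^ (r - 1) * (|a| ^ r + |b| ^ r)) ^ ((2 - r) / 2) := by
      gcongr
    _ = _ := by
      rw [div_rpow hD hr.le, mul_rpow (rpow_nonneg zero_le_two _) hS]
      ring
end
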